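/- arXiv:2407.16474 — 2 statements merged into one kernel-verified Lean document; each statement's English description precedes it below -/
import Mathlib

section
/- Let j ≤ 0 be an integer, A ≥ 0, and let f ∈ E_A be continuous from the right at 0. Then lim_{n→∞} (S_{n,j}f)(0) = f(0). -/
open MeasureTheory Real Filter

/-- Szász basis function `s_{n,k}(x)` for natural index `k`. -/
noncomputable def szasz (n k : ℕ) (x : ℝ) : ℝ :=
  Real.exp (-(n : ℝ) * x) * ((n : ℝ) * x) ^ k / (Nat.factorial k)

/-- Szász basis function for integer index, vanishing for negative index. -/
noncomputable def szaszZ (n : ℕ) (k : ℤ) (x : ℝ) : ℝ :=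
  if 0 ≤ k then szasz n k.toNat x else 0

/-- The generalized Szász–Mirakjan–Durrmeyer operator `S_{n,j}`. -/
noncomputable def Sop (n : ℕ) (j : ℤ) (f : ℝ → ℝ) (x : ℝ) : ℝ :=
  f 0 * ∑ k ∈ Finset.range j.toNat, szasz n k x
    + ∑' (k : ℕ), szasz n k x *
        ((n : ℝ) * ∫ t in Set.Ioi (0 : ℝ), szaszZ n ((k : ℤ) - j) t * f t)

/-- Membership in the class `E_A`: locally integrable on `[0,∞)` with exponential growth. -/
def MemE (A : ℝ) (f : ℝ → ℝ) : Prop :=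
  MeasureTheory.LocallyIntegrableOn f (Set.Ici 0) ∧
    ∃ K > 0, ∀ t ≥ (0 : ℝ), |f t| ≤ K * Real.exp (A * t)

/-- Falling factorial `a↓r = a(a-1)⋯(a-r+1)` for integer `a`. -/
def ffall (a : ℤ) (r : ℕ) : ℤ := ∏ i ∈ Finset.range r, (a - i)

open Set

lemma J (m : ℕ) {c : ℝ} (hc : 0 < c) :
    ∫ t in Ioi (0:ℝ), t ^ m * Real.exp (-(c * t)) = (Nat.factorial m) / c ^ (m+1) := by
  have h := Real.integral_rpow_mul_exp_neg_mul_Ioi (a := m+1) (r := c) (by positivity) hc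
  rw [Real.Gamma_nat_eq_factorial] at h
  have h2 : ((m:ℝ)+1) = ((m+1 : ℕ):ℝ) := by push_cast; ring
  rw [h2, Real.rpow_natCast] at h
  calc ∫ t in Ioi (0:ℝ), t ^ m * Real.exp (-(c * t))
      = ∫ t in Ioi (0:ℝ), t ^ ((((m+1):ℕ):ℝ)-1) * Real.exp (-(c * t)) :=
        setIntegral_congr_fun measurableSet_Ioi (fun t ht => by
          norm_num [Real.rpow_natCast])
    _ = (1/c) ^ (m+1) * (Nat.factorial m) := h
    _ = (Nat.factorial m) / c ^ (m+1) := by rw [div_pow, one_pow]; ring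

lemma I1 (m : ℕ) {c : ℝ} (hc : 0 < c) :
    IntegrableOn (fun t => t ^ m * Real.exp (-(c * t))) (Ioi (0:ℝ)) := by
  have h := integrableOn_rpow_mul_exp_neg_mul_rpow (p := 1) (s := m) (b := c)
    (lt_of_lt_of_le (by norm_num) (Nat.cast_nonneg m)) one_pos hc
  refine h.congr_fun (fun t ht => ?_) measurableSet_Ioi
  norm_num [Real.rpow_natCast]

lemma szasz_nonneg (n m : ℕ) {t : ℝ} (ht : 0 ≤ t) : 0 ≤ szasz n m t := by
  unfold szasz; positivity

lemma szasz_eq (n m : ℕ) (t : ℝ) :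
    szasz n m t = ((n:ℝ)^m / (Nat.factorial m)) * (t^m * Real.exp (-((n:ℝ)*t))) := by
  rw [szasz, neg_mul, mul_pow]; ring

lemma szasz_cont (n m : ℕ) : Continuous (fun t => szasz n m t) := by
  unfold szasz; fun_prop

lemma szasz_integrableOn (n m : ℕ) (hn : 0 < n) :
    IntegrableOn (fun t => szasz n m t) (Ioi (0:ℝ)) := by
  have hc : (0:ℝ) < n := by exact_mod_cast hn
  have h : IntegrableOn
      (fun t => ((n:ℝ)^m / (Nat.factorial m)) * (t^m * Real.exp (-((n:ℝ)*t)))) (Ioi (0:ℝ)) :=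
    (I1 m hc).const_mul _
  exact h.congr_fun (fun t ht => (szasz_eq n m t).symm) measurableSet_Ioi

lemma mass (n m : ℕ) (hn : 0 < n) :
    ∫ t in Ioi (0:ℝ), (n:ℝ) * szasz n m t = 1 := by
  have hc : (0:ℝ) < n := by exact_mod_cast hn
  have h : ∀ t : ℝ, (n:ℝ) * szasz n m t
      = ((n:ℝ)^(m+1) / (Nat.factorial m)) * (t^m * Real.exp (-((n:ℝ)*t))) := by
    intro t; rw [szasz_eq]; ring
  rw [setIntegral_congr_fun measurableSet_Ioi (fun t _ => h t), integral_const_mul, J m hc]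
  have hfac : (0:ℝ) < Nat.factorial m := by exact_mod_cast Nat.factorial_pos m
  field_simp

lemma mul_f_integrable (n m : ℕ) {A K : ℝ} {f : ℝ → ℝ} (hn : A < (n:ℝ))
    (hfm : AEStronglyMeasurable f (volume.restrict (Set.Ioi 0)))
    (hK : ∀ t ≥ (0:ℝ), |f t| ≤ K * Real.exp (A*t)) :
    IntegrableOn (fun t => szasz n m t * f t) (Set.Ioi (0:ℝ)) := by
  have hc : 0 < (n:ℝ) - A := sub_pos.2 hn
  refine ((I1 m hc).const_mul ((n:ℝ)^m / (Nat.factorial m) * K)).mono'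
    (((szasz_cont n m).aestronglyMeasurable).mul hfm) ?_
  refine (ae_restrict_iff' measurableSet_Ioi).2 (Filter.Eventually.of_forall fun t ht => ?_)
  have ht' : (0:ℝ) ≤ t := le_of_lt ht
  have hexp : Real.exp (-(((n:ℝ)-A)*t)) = Real.exp (-((n:ℝ)*t)) * Real.exp (A*t) := by
    rw [← Real.exp_add]; congr 1; ring
  calc ‖szasz n m t * f t‖ = szasz n m t * |f t| := by
        rw [Real.norm_eq_abs, abs_mul, abs_of_nonneg (szasz_nonneg n m ht')]
    _ ≤ szasz n m t * (K * Real.exp (A*t)) :=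
        mul_le_mul_of_nonneg_left (hK t ht') (szasz_nonneg n m ht')
    _ = ((n:ℝ)^m / (Nat.factorial m) * K) * (t^m * Real.exp (-(((n:ℝ)-A)*t))) := by
        rw [szasz_eq, hexp]; ring

lemma Sop_zero (n : ℕ) (j : ℤ) (hj : j ≤ 0) (f : ℝ → ℝ) :
    Sop n j f 0 = (n:ℝ) * ∫ t in Set.Ioi (0:ℝ), szasz n ((-j).toNat) t * f t := by
  have h0 : j.toNat = 0 := Int.toNat_of_nonpos hj
  have hsz : ∀ k : ℕ, k ≠ 0 →
      szasz n k 0 * ((n:ℝ) * ∫ t in Set.Ioi (0:ℝ), szaszZ n ((k:ℤ) - j) t * f t) = 0 := by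
    intro k hk; simp [szasz, zero_pow hk]
  rw [Sop, h0, tsum_eq_single 0 hsz]
  have h1 : ((0:ℕ):ℤ) - j = -j := by simp
  have h2 : szasz n 0 0 = 1 := by simp [szasz]
  rw [h1, h2]
  have h3 : ∀ t : ℝ, szaszZ n (-j) t = szasz n ((-j).toNat) t := by
    intro t; rw [szaszZ, if_pos (neg_nonneg.2 hj)]
  simp only [h3]
  simp

lemma tail_bound (m : ℕ) {nr C e c : ℝ} (hC : 0 < C) (he : 0 ≤ e) (hc : 0 < c)
    (hfrac : 2*nr/c ≤ 4) (hnr : 0 ≤ nr) :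
    (nr^(m+1)/(Nat.factorial m) * C * e) * ((Nat.factorial m)/(c/2)^(m+1))
      ≤ C * 4^(m+1) * e := by
  have hfac : (0:ℝ) < Nat.factorial m := by exact_mod_cast Nat.factorial_pos m
  have hkey : (nr^(m+1)/(Nat.factorial m) * C * e) * ((Nat.factorial m)/(c/2)^(m+1))
      = C * e * (2*nr/c)^(m+1) := by
    rw [div_pow, div_pow, mul_pow]
    field_simp
  rw [hkey]
  have hpow : (2*nr/c)^(m+1) ≤ (4:ℝ)^(m+1) := pow_le_pow_left₀ (by positivity) hfrac _
  calc C * e * (2*nr/c)^(m+1) ≤ C * e * 4^(m+1) :=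
        mul_le_mul_of_nonneg_left hpow (mul_nonneg hC.le he)
    _ = C * 4^(m+1) * e := by ring

/-- approximation at `x = 0` for `j ≤ 0`. -/
theorem stmt_8 (j : ℤ) (hj : j ≤ 0) (A : ℝ) (hA : 0 ≤ A) (f : ℝ → ℝ) (hf : MemE A f)
    (hfc : ContinuousWithinAt f (Set.Ici 0) 0) :
    Filter.Tendsto (fun n : ℕ => Sop n j f 0) Filter.atTop (nhds (f 0)) := by
  obtain ⟨hloc, K, hKpos, hK⟩ := hf
  set m := (-j).toNat with hm
  have hfm : AEStronglyMeasurable f (volume.restrict (Set.Ioi 0)) :=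
    (hloc.aestronglyMeasurable).mono_measure
      (Measure.restrict_mono Set.Ioi_subset_Ici_self le_rfl)
  have hf0 : |f 0| ≤ K := by have := hK 0 le_rfl; simpa using this
  set C := K + |f 0| with hCdef
  have hCpos : 0 < C := add_pos_of_pos_of_nonneg hKpos (abs_nonneg _)
  set C4 := C * 4^(m+1) with hC4def
  have hC4pos : 0 < C4 := by positivity
  rw [Metric.tendsto_atTop]
  intro ε hε
  obtain ⟨δ, hδpos, hδ⟩ := Metric.continuousWithinAt_iff.1 hfc (ε/4) (by positivity)
  set δ₀ := δ/2 with hδ₀def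
  have hδ₀ : 0 < δ₀ := half_pos hδpos
  have htail : Tendsto (fun n : ℕ => C4 * Real.exp (-(((n:ℝ) - A) * (δ₀/2)))) atTop (nhds 0) := by
    have h1 : Tendsto (fun n : ℕ => ((n:ℝ) - A) * (δ₀/2)) atTop atTop := by
      apply Tendsto.atTop_mul_const (by positivity)
      simpa [sub_eq_add_neg] using
        tendsto_atTop_add_const_right atTop (-A) tendsto_natCast_atTop_atTop
    have h2 : Tendsto (fun n : ℕ => Real.exp (-(((n:ℝ) - A) * (δ₀/2)))) atTop (nhds 0) :=
      Real.tendsto_exp_atBot.comp (tendsto_neg_atBot_iff.2 h1)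
    simpa using h2.const_mul C4
  have hev : ∀ᶠ n : ℕ in atTop, A < (n:ℝ) ∧ 2*A ≤ (n:ℝ) ∧ 1 ≤ n ∧
      C4 * Real.exp (-(((n:ℝ) - A) * (δ₀/2))) < ε/4 := by
    filter_upwards [tendsto_natCast_atTop_atTop.eventually_gt_atTop A,
      tendsto_natCast_atTop_atTop.eventually_ge_atTop (2*A),
      eventually_ge_atTop 1,
      htail.eventually_lt_const (by positivity : (0:ℝ) < ε/4)] with n h1 h2 h3 h4
    exact ⟨h1, h2, h3, h4⟩
  obtain ⟨N, hN⟩ := eventually_atTop.1 hev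
  refine ⟨N, fun n hn => ?_⟩
  obtain ⟨hnA, h2A, hn1, hbnd⟩ := hN n hn
  have hn0 : 0 < n := hn1
  have hnR : (0:ℝ) < n := by exact_mod_cast hn0
  set c := (n:ℝ) - A with hcdef
  have hc : 0 < c := sub_pos.2 hnA
  have hc2 : 0 < c/2 := half_pos hc
  have hI2 : IntegrableOn (fun t => szasz n m t * f t) (Set.Ioi (0:ℝ)) :=
    mul_f_integrable n m hnA hfm hK
  have hIsz : IntegrableOn (fun t => szasz n m t) (Set.Ioi (0:ℝ)) := szasz_integrableOn n m hn0
  have hI2c : IntegrableOn (fun t => szasz n m t * f 0) (Set.Ioi (0:ℝ)) := hIsz.mul_const _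
  have hIG : IntegrableOn (fun t => (n:ℝ) * (szasz n m t * (f t - f 0))) (Set.Ioi (0:ℝ)) := by
    have h : IntegrableOn (fun t => (n:ℝ) * (szasz n m t * f t - szasz n m t * f 0))
        (Set.Ioi (0:ℝ)) := (hI2.sub hI2c).const_mul _
    exact h.congr_fun (fun t _ => by ring) measurableSet_Ioi
  have hIH : IntegrableOn (fun t => (n:ℝ) * (szasz n m t * |f t - f 0|)) (Set.Ioi (0:ℝ)) := by
    have h : IntegrableOn (fun t => ‖(n:ℝ) * (szasz n m t * (f t - f 0))‖)
        (Set.Ioi (0:ℝ)) := hIG.norm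
    exact h.congr_fun (fun t ht => by
      dsimp only
      rw [Real.norm_eq_abs, abs_mul, abs_mul,
        abs_of_nonneg (szasz_nonneg n m (le_of_lt ht)), Nat.abs_cast]) measurableSet_Ioi
  have hmass : (n:ℝ) * ∫ t in Ioi (0:ℝ), szasz n m t = 1 := by
    have := mass n m hn0; rwa [integral_const_mul] at this
  have hdiff : Sop n j f 0 - f 0 = ∫ t in Ioi (0:ℝ), (n:ℝ) * (szasz n m t * (f t - f 0)) := by
    rw [Sop_zero n j hj f, ← hm]
    rw [show (fun t => (n:ℝ) * (szasz n m t * (f t - f 0)))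
        = fun t => (n:ℝ) * (szasz n m t * f t - szasz n m t * f 0) from funext fun t => by ring]
    rw [integral_const_mul, integral_sub hI2 hI2c, integral_mul_const]
    linear_combination (f 0) * hmass
  have habs : |Sop n j f 0 - f 0| ≤ ∫ t in Ioi (0:ℝ), (n:ℝ) * (szasz n m t * |f t - f 0|) := by
    rw [hdiff, ← Real.norm_eq_abs]
    refine (norm_integral_le_integral_norm _).trans (le_of_eq ?_)
    refine setIntegral_congr_fun measurableSet_Ioi fun t ht => ?_
    rw [Real.norm_eq_abs, abs_mul, abs_mul,
      abs_of_nonneg (szasz_nonneg n m (le_of_lt ht)), Nat.abs_cast]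
  have hsplit : ∫ t in Ioi (0:ℝ), (n:ℝ) * (szasz n m t * |f t - f 0|)
      = (∫ t in Ioc (0:ℝ) δ₀, (n:ℝ) * (szasz n m t * |f t - f 0|))
        + ∫ t in Ioi δ₀, (n:ℝ) * (szasz n m t * |f t - f 0|) := by
    rw [← Set.Ioc_union_Ioi_eq_Ioi hδ₀.le,
      setIntegral_union (Set.Ioc_disjoint_Ioi le_rfl) measurableSet_Ioi
        (hIH.mono_set Set.Ioc_subset_Ioi_self) (hIH.mono_set (Set.Ioi_subset_Ioi hδ₀.le))]
  have hb1 : IntegrableOn (fun t => (n:ℝ) * (szasz n m t * (ε/4))) (Set.Ioi (0:ℝ)) :=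
    (hIsz.mul_const (ε/4)).const_mul _
  have hP1 : (∫ t in Ioc (0:ℝ) δ₀, (n:ℝ) * (szasz n m t * |f t - f 0|)) ≤ ε/4 := by
    calc (∫ t in Ioc (0:ℝ) δ₀, (n:ℝ) * (szasz n m t * |f t - f 0|))
        ≤ ∫ t in Ioc (0:ℝ) δ₀, (n:ℝ) * (szasz n m t * (ε/4)) := by
          refine setIntegral_mono_on (hIH.mono_set Set.Ioc_subset_Ioi_self)
            (hb1.mono_set Set.Ioc_subset_Ioi_self) measurableSet_Ioc fun t ht => ?_
          have h1 : |f t - f 0| ≤ ε/4 := by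
            have hd : dist t 0 < δ := by
              rw [Real.dist_eq, sub_zero, abs_of_nonneg ht.1.le]
              have := ht.2; rw [hδ₀def] at this; linarith
            exact le_of_lt (by simpa [Real.dist_eq] using hδ (Set.mem_Ici.2 ht.1.le) hd)
          exact mul_le_mul_of_nonneg_left
            (mul_le_mul_of_nonneg_left h1 (szasz_nonneg n m ht.1.le)) (Nat.cast_nonneg n)
      _ ≤ ∫ t in Ioi (0:ℝ), (n:ℝ) * (szasz n m t * (ε/4)) := by
          refine setIntegral_mono_set hb1 ?_
            (HasSubset.Subset.eventuallyLE Set.Ioc_subset_Ioi_self)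
          refine (ae_restrict_iff' measurableSet_Ioi).2
            (Filter.Eventually.of_forall fun t ht => ?_)
          simp only [Pi.zero_apply]
          exact mul_nonneg (Nat.cast_nonneg n)
            (mul_nonneg (szasz_nonneg n m (le_of_lt ht)) (by positivity))
      _ = ε/4 := by
          simp only [← mul_assoc]
          rw [integral_mul_const, integral_const_mul, hmass, one_mul]
  have hbI : IntegrableOn
      (fun t => ((n:ℝ)^(m+1)/(Nat.factorial m) * C * Real.exp (-(c*(δ₀/2))))
        * (t^m * Real.exp (-((c/2)*t)))) (Set.Ioi (0:ℝ)) :=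
    (I1 m hc2).const_mul _
  have hP2 : (∫ t in Ioi δ₀, (n:ℝ) * (szasz n m t * |f t - f 0|))
      ≤ C4 * Real.exp (-(c * (δ₀/2))) := by
    have hfac : (0:ℝ) < Nat.factorial m := by exact_mod_cast Nat.factorial_pos m
    calc (∫ t in Ioi δ₀, (n:ℝ) * (szasz n m t * |f t - f 0|))
        ≤ ∫ t in Ioi δ₀, ((n:ℝ)^(m+1)/(Nat.factorial m) * C * Real.exp (-(c*(δ₀/2))))
            * (t^m * Real.exp (-((c/2)*t))) := by
          refine setIntegral_mono_on (hIH.mono_set (Set.Ioi_subset_Ioi hδ₀.le))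
            (hbI.mono_set (Set.Ioi_subset_Ioi hδ₀.le)) measurableSet_Ioi fun t ht => ?_
          have ht0 : (0:ℝ) < t := lt_trans hδ₀ ht
          have hft : |f t - f 0| ≤ C * Real.exp (A*t) := by
            have h1 := hK t ht0.le
            have h2 : (1:ℝ) ≤ Real.exp (A*t) := Real.one_le_exp (by positivity)
            have h3 : |f t - f 0| ≤ |f t| + |f 0| := abs_sub _ _
            nlinarith [abs_nonneg (f 0)]
          have step1 : (n:ℝ) * (szasz n m t * |f t - f 0|)
              ≤ (n:ℝ) * (szasz n m t * (C * Real.exp (A*t))) :=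
            mul_le_mul_of_nonneg_left
              (mul_le_mul_of_nonneg_left hft (szasz_nonneg n m ht0.le)) (Nat.cast_nonneg n)
          have heq : (n:ℝ) * (szasz n m t * (C * Real.exp (A*t)))
              = ((n:ℝ)^(m+1)/(Nat.factorial m) * C) * (t^m * Real.exp (-(c*t))) := by
            rw [szasz_eq, show Real.exp (-(c*t))
              = Real.exp (-((n:ℝ)*t)) * Real.exp (A*t) from by
                rw [← Real.exp_add]; congr 1; rw [hcdef]; ring]
            ring
          have hexp : Real.exp (-(c*t)) ≤ Real.exp (-(c*(δ₀/2))) * Real.exp (-((c/2)*t)) := by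
            rw [← Real.exp_add]
            apply Real.exp_le_exp.2
            nlinarith [mul_le_mul_of_nonneg_left (le_of_lt ht) (le_of_lt hc2)]
          have h4 : t^m * Real.exp (-(c*t))
              ≤ t^m * (Real.exp (-(c*(δ₀/2))) * Real.exp (-((c/2)*t))) :=
            mul_le_mul_of_nonneg_left hexp (by positivity)
          have step2 : ((n:ℝ)^(m+1)/(Nat.factorial m) * C) * (t^m * Real.exp (-(c*t)))
              ≤ ((n:ℝ)^(m+1)/(Nat.factorial m) * C * Real.exp (-(c*(δ₀/2))))
                * (t^m * Real.exp (-((c/2)*t))) := by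
            calc ((n:ℝ)^(m+1)/(Nat.factorial m) * C) * (t^m * Real.exp (-(c*t)))
                ≤ ((n:ℝ)^(m+1)/(Nat.factorial m) * C)
                  * (t^m * (Real.exp (-(c*(δ₀/2))) * Real.exp (-((c/2)*t)))) :=
                  mul_le_mul_of_nonneg_left h4 (by positivity)
              _ = _ := by ring
          exact le_trans step1 (le_trans (le_of_eq heq) step2)
      _ ≤ ∫ t in Ioi (0:ℝ), ((n:ℝ)^(m+1)/(Nat.factorial m) * C * Real.exp (-(c*(δ₀/2))))
            * (t^m * Real.exp (-((c/2)*t))) := by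
          refine setIntegral_mono_set hbI ?_
            ((Set.Ioi_subset_Ioi hδ₀.le).eventuallyLE)
          refine (ae_restrict_iff' measurableSet_Ioi).2
            (Filter.Eventually.of_forall fun t ht => ?_)
          simp only [Pi.zero_apply]
          have ht' : (0:ℝ) ≤ t := le_of_lt ht
          positivity
      _ = ((n:ℝ)^(m+1)/(Nat.factorial m) * C * Real.exp (-(c*(δ₀/2))))
            * ((Nat.factorial m) / (c/2)^(m+1)) := by
          rw [integral_const_mul, J m hc2]
      _ ≤ C4 * Real.exp (-(c * (δ₀/2))) := by
          have hfrac : 2*(n:ℝ)/c ≤ 4 := by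
            rw [div_le_iff₀ hc, hcdef]; linarith
          rw [hC4def]
          exact tail_bound m hCpos (Real.exp_nonneg _) hc hfrac (Nat.cast_nonneg n)
  have hfin : |Sop n j f 0 - f 0| ≤ ε/4 + ε/4 := by
    refine habs.trans ?_
    rw [hsplit]
    exact add_le_add hP1 (hP2.trans hbnd.le)
  rw [Real.dist_eq]
  calc |Sop n j f 0 - f 0| ≤ ε/4 + ε/4 := hfin
    _ < ε := by linarith
end

section
/- (Localization.) Let j ∈ ℤ, f ∈ E, x ≥ 0 and δ > 0. If f(t) = 0 for all t ∈ (x−δ, x+δ) ∩ [0,∞), then there exist constants c > 0 and C > 0 such that |(S_{n,j}f)(x)| ≤ C e^{-cn} for all sufficiently large integers n. -/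
open MeasureTheory Real Filter

lemma szasz_nonneg_s10 (n k : ℕ) {x : ℝ} (hx : 0 ≤ x) : 0 ≤ szasz n k x := by
  unfold szasz; positivity

lemma tsum_szasz_mul_pow (n : ℕ) (x ρ : ℝ) :
    ∑' k : ℕ, szasz n k x * ρ ^ k = Real.exp ((n:ℝ) * x * (ρ - 1)) := by
  have h : ∀ k : ℕ, szasz n k x * ρ ^ k
      = Real.exp (-(n:ℝ)*x) * (((n:ℝ)*x*ρ)^k / (Nat.factorial k)) := by
    intro k; unfold szasz; rw [mul_pow]; ring
  rw [tsum_congr h, tsum_mul_left]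
  have h2 : ∑' k : ℕ, ((n:ℝ)*x*ρ)^k / (Nat.factorial k) = Real.exp ((n:ℝ)*x*ρ) := by
    rw [Real.exp_eq_exp_ℝ, NormedSpace.exp_eq_tsum_div]
  rw [h2, ← Real.exp_add]; ring_nf

lemma summable_szasz_mul_pow (n : ℕ) (x ρ : ℝ) :
    Summable (fun k : ℕ => szasz n k x * ρ ^ k) := by
  have h : ∀ k : ℕ, szasz n k x * ρ ^ k
      = Real.exp (-(n:ℝ)*x) * (((n:ℝ)*x*ρ)^k / (Nat.factorial k)) := by
    intro k; unfold szasz; rw [mul_pow]; ring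
  simp_rw [h]
  exact (Real.summable_pow_div_factorial _).mul_left _

lemma integrableOn_pow_mul_exp_neg (m : ℕ) {b : ℝ} (hb : 0 < b) :
    IntegrableOn (fun t : ℝ => t ^ m * Real.exp (-(b*t))) (Set.Ioi 0) := by
  have h := integrableOn_rpow_mul_exp_neg_mul_rpow (s := (m:ℝ)) (p := 1) (b := b)
    (lt_of_lt_of_le (by norm_num) (Nat.cast_nonneg m)) one_pos hb
  refine h.congr_fun (fun t ht => ?_) measurableSet_Ioi
  dsimp only; rw [Real.rpow_one, Real.rpow_natCast]; ring_nf

lemma integral_pow_mul_exp_neg (m : ℕ) {b : ℝ} (hb : 0 < b) :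
    ∫ t in Set.Ioi (0:ℝ), t ^ m * Real.exp (-(b*t)) = (Nat.factorial m) / b^(m+1) := by
  have h0 : ∫ t in Set.Ioi (0:ℝ), t ^ m * Real.exp (-t) = (Nat.factorial m : ℝ) := by
    have h := Real.Gamma_eq_integral (s := (m:ℝ)+1) (by positivity)
    rw [Real.Gamma_nat_eq_factorial] at h
    rw [h]
    refine setIntegral_congr_fun measurableSet_Ioi (fun t ht => ?_)
    rw [add_sub_cancel_right, Real.rpow_natCast]; ring
  have hsub := integral_comp_mul_left_Ioi (fun u : ℝ => u ^ m * Real.exp (-u)) 0 hb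
  rw [mul_zero] at hsub
  have h1 : ∫ t in Set.Ioi (0:ℝ), (b*t) ^ m * Real.exp (-(b*t))
      = b⁻¹ * (Nat.factorial m : ℝ) := by
    rw [hsub, h0, smul_eq_mul]
  have h2 : ∫ t in Set.Ioi (0:ℝ), (b*t) ^ m * Real.exp (-(b*t))
      = b ^ m * ∫ t in Set.Ioi (0:ℝ), t ^ m * Real.exp (-(b*t)) := by
    rw [← integral_const_mul]
    refine setIntegral_congr_fun measurableSet_Ioi (fun t ht => ?_)
    rw [mul_pow]; ring
  have hbm : (b:ℝ) ^ m ≠ 0 := pow_ne_zero _ hb.ne'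
  rw [h2] at h1
  field_simp [pow_succ] at h1 ⊢
  linear_combination h1

lemma szasz_exp_eq (n m : ℕ) (b t : ℝ) :
    szasz n m t * Real.exp (b * t)
      = ((n:ℝ)^m / (Nat.factorial m)) * (t ^ m * Real.exp (-(((n:ℝ) - b) * t))) := by
  have e : Real.exp (-(n:ℝ)*t) * Real.exp (b*t) = Real.exp (-(((n:ℝ)-b)*t)) := by
    rw [← Real.exp_add]; ring_nf
  unfold szasz
  rw [← e, mul_pow]; ring

lemma integrableOn_szasz_exp (n m : ℕ) {b : ℝ} (hb : b < n) :
    IntegrableOn (fun t : ℝ => szasz n m t * Real.exp (b * t)) (Set.Ioi 0) := by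
  simp_rw [szasz_exp_eq n m b]
  exact (integrableOn_pow_mul_exp_neg m (by linarith)).const_mul _

lemma integral_szasz_exp (n m : ℕ) {b : ℝ} (hb : b < n) :
    ∫ t in Set.Ioi (0:ℝ), szasz n m t * Real.exp (b * t)
      = (n:ℝ)^m / ((n:ℝ) - b)^(m+1) := by
  simp_rw [szasz_exp_eq n m b]
  rw [integral_const_mul, integral_pow_mul_exp_neg m (by linarith)]
  have hfac : (Nat.factorial m : ℝ) ≠ 0 := Nat.cast_ne_zero.2 (Nat.factorial_ne_zero m)
  field_simp

lemma zpow_le_two_pow_natAbs {ρ : ℝ} (h1 : 1/2 ≤ ρ) (h2 : ρ ≤ 2) (m : ℤ) :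
    ρ ^ m ≤ 2 ^ m.natAbs := by
  have hρ : 0 < ρ := lt_of_lt_of_le (by norm_num) h1
  cases m with
  | ofNat k => simpa using pow_le_pow_left₀ hρ.le h2 k
  | negSucc k =>
      rw [zpow_negSucc]
      have hpow : (1/2:ℝ)^(k+1) ≤ ρ^(k+1) := pow_le_pow_left₀ (by norm_num) h1 _
      have hinv : (ρ^(k+1))⁻¹ ≤ ((1/2:ℝ)^(k+1))⁻¹ :=
        inv_anti₀ (by positivity) hpow
      calc (ρ^(k+1))⁻¹ ≤ ((1/2:ℝ)^(k+1))⁻¹ := hinv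
        _ = 2^(k+1) := by rw [one_div, inv_pow, inv_inv]
        _ = 2 ^ (Int.negSucc k).natAbs := by norm_num [Int.natAbs]

lemma zpow_split {ρ : ℝ} (hρ : 0 < ρ) {k : ℕ} {j : ℤ} (h : j ≤ (k:ℤ)) :
    ρ ^ (((k:ℤ) - j).toNat + 1) = ρ ^ ((1:ℤ)-j) * ρ ^ k := by
  have hcast : ((((k:ℤ) - j).toNat + 1 : ℕ) : ℤ) = (1 - j) + k := by
    push_cast [Int.toNat_of_nonneg (by omega : (0:ℤ) ≤ (k:ℤ) - j)]; ring
  calc ρ ^ (((k:ℤ) - j).toNat + 1)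
      = ρ ^ (((((k:ℤ)-j).toNat + 1 : ℕ)) : ℤ) := by rw [zpow_natCast]
    _ = ρ ^ ((1 - j) + (k:ℤ)) := by rw [hcast]
    _ = ρ ^ ((1:ℤ)-j) * ρ ^ k := by rw [zpow_add₀ hρ.ne', zpow_natCast]

set_option maxHeartbeats 1600000 in
/-- Localization: if `f ∈ E` vanishes near `x`, then `(S_{n,j}f)(x)` decays
exponentially fast. -/
theorem stmt_10 (j : ℤ) (f : ℝ → ℝ) (hfE : ∃ A ≥ (0 : ℝ), MemE A f) (x : ℝ) (hx : 0 ≤ x)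
    (δ : ℝ) (hδ : 0 < δ)
    (hf0 : ∀ t ∈ Set.Ioo (x - δ) (x + δ) ∩ Set.Ici 0, f t = 0) :
    ∃ c > (0 : ℝ), ∃ C > (0 : ℝ), ∃ N : ℕ, ∀ n ≥ N,
      |Sop n j f x| ≤ C * Real.exp (-c * n) := by
  obtain ⟨A, hA, hloc, K, hK, hfb⟩ := hfE
  have hxδ1 : (0:ℝ) < x + δ + 1 := by linarith
  set ε : ℝ := δ / (4*(x+δ+1)) with hεdef
  have hεpos : 0 < ε := by positivity
  have hεmul : ε * (4*(x+δ+1)) = δ := div_mul_cancel₀ _ (by positivity)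
  have hε14 : ε ≤ 1/4 := by nlinarith
  have hxε : x * ε ≤ δ/4 := by nlinarith
  have hCpos : 0 < |f 0| * 2^(j.toNat) + 2*K*2^((1-j).natAbs)*Real.exp (4*x*A) + 1 := by
    have h1 : 0 ≤ |f 0| * 2^(j.toNat) := by positivity
    have h2 : 0 ≤ 2*K*2^((1-j).natAbs)*Real.exp (4*x*A) :=
      mul_nonneg (mul_nonneg (by linarith) (by positivity)) (Real.exp_pos _).le
    linarith
  refine ⟨ε*δ/2, by positivity,
    |f 0| * 2^(j.toNat) + 2*K*2^((1-j).natAbs)*Real.exp (4*x*A) + 1, hCpos,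
    ⌈A/ε⌉₊ + 1, ?_⟩
  intro n hn
  have hn1 : (1:ℝ) ≤ n := by
    have : 1 ≤ n := le_trans (Nat.le_add_left 1 _) hn
    exact_mod_cast this
  have hnpos : (0:ℝ) < n := by linarith
  have hAn : A ≤ ε * n := by
    have h1 : A / ε ≤ (⌈A/ε⌉₊ : ℝ) := Nat.le_ceil _
    have h2 : ((⌈A/ε⌉₊ : ℕ) : ℝ) ≤ n := by
      exact_mod_cast le_trans (Nat.le_succ _) hn
    rw [div_le_iff₀ hεpos] at h1
    nlinarith
  set s : ℝ := ε * n with hsdef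
  have hspos : 0 < s := by positivity
  have hsn : s ≤ (n:ℝ)/4 := by nlinarith
  have hDp_half : (n:ℝ)/2 ≤ (n:ℝ) - (A+s) := by nlinarith
  have hDp_pos : 0 < (n:ℝ) - (A+s) := by linarith
  have hDp_le : (n:ℝ) - (A+s) ≤ n := by nlinarith
  have hDm_ge : (n:ℝ) ≤ (n:ℝ) - (A-s) := by linarith
  have hDm_pos : 0 < (n:ℝ) - (A-s) := by linarith
  have hDm_le : (n:ℝ) - (A-s) ≤ 2*n := by nlinarith
  set ρp : ℝ := (n:ℝ)/((n:ℝ)-(A+s)) with hρpdef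
  set ρm : ℝ := (n:ℝ)/((n:ℝ)-(A-s)) with hρmdef
  have hρp1 : 1 ≤ ρp := (one_le_div hDp_pos).2 hDp_le
  have hρp2 : ρp ≤ 2 := by rw [hρpdef, div_le_iff₀ hDp_pos]; linarith
  have hρp_pos : 0 < ρp := by linarith
  have hρm_half : 1/2 ≤ ρm := by rw [hρmdef, le_div_iff₀ hDm_pos]; linarith
  have hρm1 : ρm ≤ 1 := by rw [hρmdef, div_le_one hDm_pos]; linarith
  have hρm_pos : 0 < ρm := by linarith
  have hApsn : A + s < (n:ℝ) := by linarith
  have hAmsn : A - s < (n:ℝ) := by linarith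
  set c1 : ℝ := K * Real.exp (-(s*(x+δ))) * ρp^((1:ℤ)-j) with hc1def
  set c2 : ℝ := K * Real.exp (s*(x-δ)) * ρm^((1:ℤ)-j) with hc2def
  have hc1 : 0 ≤ c1 :=
    mul_nonneg (mul_nonneg hK.le (Real.exp_pos _).le) (zpow_pos hρp_pos _).le
  have hc2 : 0 ≤ c2 :=
    mul_nonneg (mul_nonneg hK.le (Real.exp_pos _).le) (zpow_pos hρm_pos _).le
  set T : ℕ → ℝ := fun k => szasz n k x *
      ((n : ℝ) * ∫ t in Set.Ioi (0 : ℝ), szaszZ n ((k : ℤ) - j) t * f t) with hTdef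
  set B : ℕ → ℝ := fun k =>
      c1 * (szasz n k x * ρp^k) + c2 * (szasz n k x * ρm^k) with hBdef
  -- pointwise bound |T k| ≤ B k
  have hTB : ∀ k : ℕ, |T k| ≤ B k := by
    intro k
    have hsz : 0 ≤ szasz n k x := szasz_nonneg_s10 n k hx
    have hBnn : 0 ≤ B k := by
      have := (zpow_pos hρp_pos ((1:ℤ)-j)).le
      refine add_nonneg (mul_nonneg hc1 (mul_nonneg hsz (by positivity)))
        (mul_nonneg hc2 (mul_nonneg hsz (by positivity)))
    rcases lt_or_ge ((k:ℤ)-j) 0 with hkj | hkj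
    · have hz : ∀ t : ℝ, szaszZ n ((k:ℤ)-j) t * f t = 0 := by
        intro t; unfold szaszZ; rw [if_neg (not_le.2 hkj)]; ring
      have : T k = 0 := by
        rw [hTdef]; simp only; rw [funext hz]; simp
      rw [this, abs_zero]; exact hBnn
    · set m : ℕ := ((k:ℤ)-j).toNat with hmdef
      have hint_eq : ∀ t : ℝ, szaszZ n ((k:ℤ)-j) t = szasz n m t := by
        intro t; unfold szaszZ; rw [if_pos hkj]
      set g : ℝ → ℝ := fun t =>
          K * Real.exp (-(s*(x+δ))) * (szasz n m t * Real.exp ((A+s)*t))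
        + K * Real.exp (s*(x-δ)) * (szasz n m t * Real.exp ((A-s)*t)) with hgdef
      have hgi1 : IntegrableOn (fun t : ℝ => szasz n m t * Real.exp ((A+s)*t)) (Set.Ioi 0) :=
        integrableOn_szasz_exp n m hApsn
      have hgi2 : IntegrableOn (fun t : ℝ => szasz n m t * Real.exp ((A-s)*t)) (Set.Ioi 0) :=
        integrableOn_szasz_exp n m hAmsn
      have hgint : IntegrableOn g (Set.Ioi 0) := (hgi1.const_mul _).add (hgi2.const_mul _)
      have hgnn : ∀ t ∈ Set.Ioi (0:ℝ), 0 ≤ g t := by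
        intro t ht
        have hszt : 0 ≤ szasz n m t := szasz_nonneg_s10 n m (le_of_lt ht)
        refine add_nonneg (mul_nonneg (mul_nonneg hK.le (Real.exp_pos _).le)
          (mul_nonneg hszt (Real.exp_pos _).le))
          (mul_nonneg (mul_nonneg hK.le (Real.exp_pos _).le)
          (mul_nonneg hszt (Real.exp_pos _).le))
      have hptwise : ∀ t ∈ Set.Ioi (0:ℝ), ‖szaszZ n ((k:ℤ)-j) t * f t‖ ≤ g t := by
        intro t ht
        rw [hint_eq t, Real.norm_eq_abs, abs_mul,
          abs_of_nonneg (szasz_nonneg_s10 n m (le_of_lt ht))]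
        have hszt : 0 ≤ szasz n m t := szasz_nonneg_s10 n m (le_of_lt ht)
        by_cases hmem : t ∈ Set.Ioo (x-δ) (x+δ)
        · rw [hf0 t ⟨hmem, Set.mem_Ici.2 (le_of_lt ht)⟩, abs_zero, mul_zero]
          exact hgnn t ht
        · have hft : |f t| ≤ K * Real.exp (A*t) := hfb t (le_of_lt ht)
          rw [Set.mem_Ioo, not_and_or, not_lt, not_lt] at hmem
          rcases hmem with h1 | h2
          · -- t ≤ x - δ
            have key : K * Real.exp (A*t) ≤ K * Real.exp (s*(x-δ)) * Real.exp ((A-s)*t) := by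
              rw [mul_assoc, ← Real.exp_add]
              refine mul_le_mul_of_nonneg_left (Real.exp_le_exp.2 ?_) hK.le
              have hmul := mul_le_mul_of_nonneg_left h1 hspos.le
              linarith
            have step : szasz n m t * |f t|
                ≤ K * Real.exp (s*(x-δ)) * (szasz n m t * Real.exp ((A-s)*t)) := by
              have := mul_le_mul_of_nonneg_left (hft.trans key) hszt
              calc szasz n m t * |f t|
                  ≤ szasz n m t * (K * Real.exp (s*(x-δ)) * Real.exp ((A-s)*t)) := this
                _ = K * Real.exp (s*(x-δ)) * (szasz n m t * Real.exp ((A-s)*t)) := by ring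
            have hfirst : 0 ≤ K * Real.exp (-(s*(x+δ))) * (szasz n m t * Real.exp ((A+s)*t)) :=
              mul_nonneg (mul_nonneg hK.le (Real.exp_pos _).le)
                (mul_nonneg hszt (Real.exp_pos _).le)
            rw [hgdef]; dsimp only
            linarith
          · -- x + δ ≤ t
            have key : K * Real.exp (A*t) ≤ K * Real.exp (-(s*(x+δ))) * Real.exp ((A+s)*t) := by
              rw [mul_assoc, ← Real.exp_add]
              refine mul_le_mul_of_nonneg_left (Real.exp_le_exp.2 ?_) hK.le
              have hmul := mul_le_mul_of_nonneg_left h2 hspos.le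
              linarith
            have step : szasz n m t * |f t|
                ≤ K * Real.exp (-(s*(x+δ))) * (szasz n m t * Real.exp ((A+s)*t)) := by
              have := mul_le_mul_of_nonneg_left (hft.trans key) hszt
              calc szasz n m t * |f t|
                  ≤ szasz n m t * (K * Real.exp (-(s*(x+δ))) * Real.exp ((A+s)*t)) := this
                _ = K * Real.exp (-(s*(x+δ))) * (szasz n m t * Real.exp ((A+s)*t)) := by ring
            have hsecond : 0 ≤ K * Real.exp (s*(x-δ)) * (szasz n m t * Real.exp ((A-s)*t)) :=
              mul_nonneg (mul_nonneg hK.le (Real.exp_pos _).le)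
                (mul_nonneg hszt (Real.exp_pos _).le)
            rw [hgdef]; dsimp only
            linarith
      have habs : |∫ t in Set.Ioi (0:ℝ), szaszZ n ((k:ℤ)-j) t * f t|
          ≤ ∫ t in Set.Ioi (0:ℝ), g t := by
        calc |∫ t in Set.Ioi (0:ℝ), szaszZ n ((k:ℤ)-j) t * f t|
            = ‖∫ t in Set.Ioi (0:ℝ), szaszZ n ((k:ℤ)-j) t * f t‖ :=
              (Real.norm_eq_abs _).symm
          _ ≤ ∫ t in Set.Ioi (0:ℝ), ‖szaszZ n ((k:ℤ)-j) t * f t‖ :=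
              norm_integral_le_integral_norm _
          _ ≤ ∫ t in Set.Ioi (0:ℝ), g t := by
              refine integral_mono_of_nonneg
                (Filter.Eventually.of_forall (fun t => norm_nonneg _)) hgint ?_
              exact (ae_restrict_iff' measurableSet_Ioi).2
                (Filter.Eventually.of_forall hptwise)
      have hIg : ∫ t in Set.Ioi (0:ℝ), g t
          = K * Real.exp (-(s*(x+δ))) * ((n:ℝ)^m/((n:ℝ)-(A+s))^(m+1))
          + K * Real.exp (s*(x-δ)) * ((n:ℝ)^m/((n:ℝ)-(A-s))^(m+1)) := by
        rw [hgdef]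
        rw [integral_add (hgi1.const_mul _) (hgi2.const_mul _),
          integral_const_mul, integral_const_mul,
          integral_szasz_exp n m hApsn, integral_szasz_exp n m hAmsn]
      have hnIp : (n:ℝ) * ((n:ℝ)^m/((n:ℝ)-(A+s))^(m+1)) = ρp^((1:ℤ)-j) * ρp^k := by
        rw [← zpow_split hρp_pos (by omega : j ≤ (k:ℤ)), hρpdef, div_pow, pow_succ]
        field_simp; ring
      have hnIm : (n:ℝ) * ((n:ℝ)^m/((n:ℝ)-(A-s))^(m+1)) = ρm^((1:ℤ)-j) * ρm^k := by
        rw [← zpow_split hρm_pos (by omega : j ≤ (k:ℤ)), hρmdef, div_pow, pow_succ]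
        field_simp; ring
      have hfinal : (n:ℝ) * ∫ t in Set.Ioi (0:ℝ), g t = c1 * ρp^k + c2 * ρm^k := by
        rw [hIg, hc1def, hc2def, mul_add]
        rw [show (n:ℝ) * (K * Real.exp (-(s*(x+δ))) * ((n:ℝ)^m/((n:ℝ)-(A+s))^(m+1)))
            = K * Real.exp (-(s*(x+δ))) * ((n:ℝ) * ((n:ℝ)^m/((n:ℝ)-(A+s))^(m+1))) by ring,
          show (n:ℝ) * (K * Real.exp (s*(x-δ)) * ((n:ℝ)^m/((n:ℝ)-(A-s))^(m+1)))
            = K * Real.exp (s*(x-δ)) * ((n:ℝ) * ((n:ℝ)^m/((n:ℝ)-(A-s))^(m+1))) by ring,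
          hnIp, hnIm]
        ring
      calc |T k| = szasz n k x * |(n : ℝ) * ∫ t in Set.Ioi (0:ℝ), szaszZ n ((k:ℤ)-j) t * f t| := by
            rw [hTdef]; dsimp only; rw [abs_mul, abs_of_nonneg hsz]
        _ = szasz n k x * ((n:ℝ) * |∫ t in Set.Ioi (0:ℝ), szaszZ n ((k:ℤ)-j) t * f t|) := by
            rw [abs_mul, abs_of_nonneg hnpos.le]
        _ ≤ szasz n k x * ((n:ℝ) * ∫ t in Set.Ioi (0:ℝ), g t) :=
            mul_le_mul_of_nonneg_left
              (mul_le_mul_of_nonneg_left habs hnpos.le) hsz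
        _ = szasz n k x * (c1 * ρp^k + c2 * ρm^k) := by rw [hfinal]
        _ = B k := by rw [hBdef]; dsimp only; ring
  have hBsum : Summable B :=
    ((summable_szasz_mul_pow n x ρp).mul_left c1).add
      ((summable_szasz_mul_pow n x ρm).mul_left c2)
  have hTabs : Summable (fun k => |T k|) :=
    Summable.of_nonneg_of_le (fun k => abs_nonneg _) hTB hBsum
  have hBtsum : ∑' k, B k
      = c1 * Real.exp ((n:ℝ)*x*(ρp-1)) + c2 * Real.exp ((n:ℝ)*x*(ρm-1)) := by
    rw [hBdef]
    rw [Summable.tsum_add ((summable_szasz_mul_pow n x ρp).mul_left c1)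
      ((summable_szasz_mul_pow n x ρm).mul_left c2),
      tsum_mul_left, tsum_mul_left, tsum_szasz_mul_pow, tsum_szasz_mul_pow]
  have htsum_le : |∑' k, T k| ≤ c1 * Real.exp ((n:ℝ)*x*(ρp-1)) + c2 * Real.exp ((n:ℝ)*x*(ρm-1)) := by
    calc |∑' k, T k| ≤ ∑' k, |T k| := by
          have := norm_tsum_le_tsum_norm (f := T) (by simpa [Real.norm_eq_abs] using hTabs)
          simpa [Real.norm_eq_abs] using this
      _ ≤ ∑' k, B k := Summable.tsum_le_tsum hTB hTabs hBsum
      _ = _ := hBtsum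
  -- exponent inequalities
  have keyp : (n:ℝ)*x*(ρp-1) - s*x = x*((n:ℝ)*A + s*A + s^2)/((n:ℝ)-(A+s)) := by
    rw [hρpdef]; field_simp; ring
  have keym : (n:ℝ)*x*(ρm-1) + s*x = x*((n:ℝ)*A - s*A + s^2)/((n:ℝ)-(A-s)) := by
    rw [hρmdef]; field_simp; ring
  have Ep : (n:ℝ)*x*(ρp-1) - s*(x+δ) ≤ 4*x*A - ε*δ*n/2 := by
    have hnum : 0 ≤ x*((n:ℝ)*A + s*A + s^2) := by positivity
    have hq : x*((n:ℝ)*A + s*A + s^2)/((n:ℝ)-(A+s))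
        ≤ x*((n:ℝ)*A + s*A + s^2)/((n:ℝ)/2) :=
      div_le_div_of_nonneg_left hnum (by positivity) hDp_half
    have hq2 : x*((n:ℝ)*A + s*A + s^2)/((n:ℝ)/2) ≤ 4*x*A + ε*δ*n/2 := by
      rw [div_le_iff₀ (by positivity : (0:ℝ) < (n:ℝ)/2)]
      have t1 : x*s*A ≤ x*(n:ℝ)*A := by
        have h1 := mul_le_mul_of_nonneg_left hsn (mul_nonneg hx hA)
        have h2 : 0 ≤ x*A*(n:ℝ) := mul_nonneg (mul_nonneg hx hA) hnpos.le
        linarith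
      have t2 : x*s^2 ≤ ε*δ*(n:ℝ)^2/4 := by
        rw [hsdef]
        have h1 := mul_le_mul_of_nonneg_right hxε (mul_nonneg hεpos.le (sq_nonneg (n:ℝ)))
        linarith
      linarith
    have hthis : (n:ℝ)*x*(ρp-1) - s*x ≤ 4*x*A + ε*δ*n/2 := by
      rw [keyp]; linarith
    have hsδ : s*δ = ε*δ*n := by rw [hsdef]; ring
    have expand : s*(x+δ) = s*x + s*δ := by ring
    linarith
  have Em : (n:ℝ)*x*(ρm-1) + s*(x-δ) ≤ 4*x*A - ε*δ*n/2 := by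
    have hnsA : 0 ≤ ((n:ℝ) - s)*A := mul_nonneg (by linarith) hA
    have hnum : 0 ≤ x*((n:ℝ)*A - s*A + s^2) :=
      mul_nonneg hx (by linarith [hnsA, sq_nonneg s])
    have hq : x*((n:ℝ)*A - s*A + s^2)/((n:ℝ)-(A-s))
        ≤ x*((n:ℝ)*A - s*A + s^2)/(n:ℝ) :=
      div_le_div_of_nonneg_left hnum hnpos hDm_ge
    have hq2 : x*((n:ℝ)*A - s*A + s^2)/(n:ℝ) ≤ x*A + ε*δ*n/4 := by
      rw [div_le_iff₀ hnpos]
      have t2 : x*s^2 ≤ ε*δ*(n:ℝ)^2/4 := by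
        rw [hsdef]
        have h1 := mul_le_mul_of_nonneg_right hxε (mul_nonneg hεpos.le (sq_nonneg (n:ℝ)))
        linarith
      have hxsA : 0 ≤ x*s*A := mul_nonneg (mul_nonneg hx hspos.le) hA
      linarith
    have hthis : (n:ℝ)*x*(ρm-1) + s*x ≤ x*A + ε*δ*n/4 := by
      rw [keym]; linarith
    have hsδ : s*δ = ε*δ*n := by rw [hsdef]; ring
    have hxA : 0 ≤ x*A := mul_nonneg hx hA
    have hεδn : 0 ≤ ε*δ*n := by positivity
    linarith
  -- bound the two main terms
  have hzp : ρp^((1:ℤ)-j) ≤ 2^((1-j).natAbs) := zpow_le_two_pow_natAbs (by linarith) hρp2 _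
  have hzm : ρm^((1:ℤ)-j) ≤ 2^((1-j).natAbs) := zpow_le_two_pow_natAbs hρm_half (by linarith) _
  have bound1 : c1 * Real.exp ((n:ℝ)*x*(ρp-1))
      ≤ K * 2^((1-j).natAbs) * Real.exp (4*x*A) * Real.exp (-(ε*δ/2)*n) := by
    have e2 : Real.exp (-(s*(x+δ))) * Real.exp ((n:ℝ)*x*(ρp-1))
        ≤ Real.exp (4*x*A) * Real.exp (-(ε*δ/2)*n) := by
      rw [← Real.exp_add, ← Real.exp_add]
      exact Real.exp_le_exp.2 (by linarith [Ep])
    calc c1 * Real.exp ((n:ℝ)*x*(ρp-1))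
        = K * ρp^((1:ℤ)-j) * (Real.exp (-(s*(x+δ))) * Real.exp ((n:ℝ)*x*(ρp-1))) := by
          rw [hc1def]; ring
      _ ≤ K * 2^((1-j).natAbs) * (Real.exp (4*x*A) * Real.exp (-(ε*δ/2)*n)) := by
          refine mul_le_mul (mul_le_mul_of_nonneg_left hzp hK.le) e2 (by positivity) ?_
          exact mul_nonneg hK.le (by positivity)
      _ = K * 2^((1-j).natAbs) * Real.exp (4*x*A) * Real.exp (-(ε*δ/2)*n) := by ring
  have bound2 : c2 * Real.exp ((n:ℝ)*x*(ρm-1))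
      ≤ K * 2^((1-j).natAbs) * Real.exp (4*x*A) * Real.exp (-(ε*δ/2)*n) := by
    have e2 : Real.exp (s*(x-δ)) * Real.exp ((n:ℝ)*x*(ρm-1))
        ≤ Real.exp (4*x*A) * Real.exp (-(ε*δ/2)*n) := by
      rw [← Real.exp_add, ← Real.exp_add]
      exact Real.exp_le_exp.2 (by linarith [Em])
    calc c2 * Real.exp ((n:ℝ)*x*(ρm-1))
        = K * ρm^((1:ℤ)-j) * (Real.exp (s*(x-δ)) * Real.exp ((n:ℝ)*x*(ρm-1))) := by
          rw [hc2def]; ring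
      _ ≤ K * 2^((1-j).natAbs) * (Real.exp (4*x*A) * Real.exp (-(ε*δ/2)*n)) := by
          refine mul_le_mul (mul_le_mul_of_nonneg_left hzm hK.le) e2 (by positivity) ?_
          exact mul_nonneg hK.le (by positivity)
      _ = K * 2^((1-j).natAbs) * Real.exp (4*x*A) * Real.exp (-(ε*δ/2)*n) := by ring
  -- f(0) term
  have hf0term : |f 0 * ∑ k ∈ Finset.range j.toNat, szasz n k x|
      ≤ |f 0| * 2^(j.toNat) * Real.exp (-(ε*δ/2)*n) := by
    by_cases hf00 : f 0 = 0
    · rw [hf00]; simp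
    · have hxδ : δ ≤ x := by
        by_contra hcon; push_neg at hcon
        exact hf00 (hf0 0 ⟨⟨by linarith, by linarith⟩, le_refl (0:ℝ)⟩)
      have hterm : ∀ k : ℕ, szasz n k x ≤ 2^k * Real.exp (-((n:ℝ)*x)/2) := by
        intro k
        have h1 : ((n:ℝ)*x)^k / (Nat.factorial k) ≤ 2^k * Real.exp ((n:ℝ)*x/2) := by
          have hple := Real.pow_div_factorial_le_exp (x := (n:ℝ)*x/2) (by positivity) k
          have hb : ((n:ℝ)*x) = 2*((n:ℝ)*x/2) := by ring
          have heq : ((n:ℝ)*x)^k / (Nat.factorial k)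
              = 2^k * (((n:ℝ)*x/2)^k / (Nat.factorial k)) := by
            calc ((n:ℝ)*x)^k / (Nat.factorial k)
                = (2*((n:ℝ)*x/2))^k / (Nat.factorial k) := by rw [← hb]
              _ = 2^k * (((n:ℝ)*x/2)^k) / (Nat.factorial k) := by rw [mul_pow]
              _ = 2^k * (((n:ℝ)*x/2)^k / (Nat.factorial k)) := by rw [mul_div_assoc]
          rw [heq]
          exact mul_le_mul_of_nonneg_left hple (by positivity)
        unfold szasz
        calc Real.exp (-(n:ℝ)*x) * ((n:ℝ)*x)^k / (Nat.factorial k)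
            = Real.exp (-(n:ℝ)*x) * (((n:ℝ)*x)^k / (Nat.factorial k)) := by ring
          _ ≤ Real.exp (-(n:ℝ)*x) * (2^k * Real.exp ((n:ℝ)*x/2)) :=
              mul_le_mul_of_nonneg_left h1 (Real.exp_pos _).le
          _ = 2^k * (Real.exp (-(n:ℝ)*x) * Real.exp ((n:ℝ)*x/2)) := by ring
          _ = 2^k * Real.exp (-((n:ℝ)*x)/2) := by rw [← Real.exp_add]; ring_nf
      have hgeom : ∑ k ∈ Finset.range j.toNat, (2:ℝ)^k ≤ 2^(j.toNat) := by
        have h2 := geom_sum_eq (by norm_num : (2:ℝ) ≠ 1) j.toNat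
        rw [h2]
        norm_num
      have hsum : ∑ k ∈ Finset.range j.toNat, szasz n k x
          ≤ 2^(j.toNat) * Real.exp (-(ε*δ/2)*n) := by
        calc ∑ k ∈ Finset.range j.toNat, szasz n k x
            ≤ ∑ k ∈ Finset.range j.toNat, (2:ℝ)^k * Real.exp (-((n:ℝ)*x)/2) :=
              Finset.sum_le_sum (fun k _ => hterm k)
          _ = (∑ k ∈ Finset.range j.toNat, (2:ℝ)^k) * Real.exp (-((n:ℝ)*x)/2) := by
              rw [Finset.sum_mul]
          _ ≤ 2^(j.toNat) * Real.exp (-((n:ℝ)*x)/2) :=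
              mul_le_mul_of_nonneg_right hgeom (Real.exp_pos _).le
          _ ≤ 2^(j.toNat) * Real.exp (-(ε*δ/2)*n) := by
              refine mul_le_mul_of_nonneg_left (Real.exp_le_exp.2 ?_) (by positivity)
              nlinarith
      rw [abs_mul]
      have habs2 : |∑ k ∈ Finset.range j.toNat, szasz n k x|
          = ∑ k ∈ Finset.range j.toNat, szasz n k x :=
        abs_of_nonneg (Finset.sum_nonneg (fun k _ => szasz_nonneg_s10 n k hx))
      rw [habs2, mul_assoc]
      exact mul_le_mul_of_nonneg_left hsum (abs_nonneg _)
  -- final assembly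
  have hSop_eq : Sop n j f x
      = f 0 * ∑ k ∈ Finset.range j.toNat, szasz n k x + ∑' k, T k := rfl
  have hE : (0:ℝ) < Real.exp (-(ε*δ/2)*n) := Real.exp_pos _
  calc |Sop n j f x|
      ≤ |f 0 * ∑ k ∈ Finset.range j.toNat, szasz n k x| + |∑' k, T k| := by
        rw [hSop_eq]; exact abs_add_le _ _
    _ ≤ |f 0| * 2^(j.toNat) * Real.exp (-(ε*δ/2)*n)
        + (K * 2^((1-j).natAbs) * Real.exp (4*x*A) * Real.exp (-(ε*δ/2)*n)
          + K * 2^((1-j).natAbs) * Real.exp (4*x*A) * Real.exp (-(ε*δ/2)*n)) := by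
        have := htsum_le.trans (add_le_add bound1 bound2)
        linarith [hf0term]
    _ ≤ (|f 0| * 2^(j.toNat) + 2*K*2^((1-j).natAbs)*Real.exp (4*x*A) + 1)
        * Real.exp (-(ε*δ/2) * n) := by nlinarith [hE]
end
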